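/- arXiv:math/9805114 — 3 statements merged into one kernel-verified Lean document; each statement's English description precedes it below -/
import Mathlib

section
/- Let n ≥ 0 and let k, k_0, k_1, …, k_n be natural numbers, and set N = (k+1) + k_0 + k_1 + ⋯ + k_n. Then the multinomial identity N!/(k_0!⋯k_n!(k+1)!) = C(k_0+k+1, k_0)·(N−1)!/((k_0+k)!·k_1!⋯k_n!) + Σ_{i=1}^{n} C(k_i+k, k_i−1)·(N−1)!/(k_0!⋯(k_i+k)!⋯k_n!) holds, where in the i-th summand the factor C(k_i+k, k_i−1) is taken to be 0 when k_i = 0. -/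
/-!
With `M = (N-1)!/(k₀! k₁!⋯kₙ! (k+1)!)`, the first summand on the right equals `(k₀+k+1)·M` and
the `i`-th summand equals `kᵢ·M` (both by writing the binomial coefficient as a quotient of
factorials). The right-hand side is therefore `N·M = N!/(k₀!⋯kₙ!(k+1)!)`.
-/

open Finset Nat

theorem prod_factorial_update_mul_factorial {ι : Type*} [Fintype ι] [DecidableEq ι]
    (f : ι → ℕ) (i : ι) (b : ℕ) :
    (∏ j, (Function.update f i b j)!) * (f i)! = b ! * ∏ j, (f j)! := by
  simp_rw [Function.apply_update (fun _ m => m !) f i b]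
  rw [prod_update_of_mem (mem_univ i), Fintype.prod_eq_mul_prod_compl i, compl_eq_univ_sdiff]
  ring

theorem cast_choose_add_succ (a k : ℕ) :
    ((a + k + 1).choose a : ℚ) = (a + k + 1)! / (a ! * (k + 1)!) := by
  rw [Nat.cast_choose ℚ (by omega : a ≤ a + k + 1), show a + k + 1 - a = k + 1 by omega]

theorem cast_choose_add_succ_mul_div (a k : ℕ) (c P : ℚ) :
    ((a + k + 1).choose a : ℚ) * c / ((a + k)! * P) =
      (a + k + 1) * (c / ((a ! * P) * (k + 1)!)) := by
  rw [cast_choose_add_succ, factorial_succ]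
  push_cast
  field_simp

theorem ite_choose_mul_div_prod_update {ι : Type*} [Fintype ι] [DecidableEq ι]
    (K : ι → ℕ) (i : ι) (k a : ℕ) (c : ℚ) :
    (if K i = 0 then 0 else ((K i + k).choose (K i - 1) : ℚ)) * c /
        (a ! * ∏ j, (Function.update K i (K i + k) j)!) =
      K i * (c / ((a ! * ∏ j, (K j)!) * (k + 1)!)) := by
  by_cases hi : K i = 0
  · simp [hi]
  obtain ⟨m, hm⟩ := Nat.exists_eq_add_one_of_ne_zero hi
  have hprod : ((∏ j, (Function.update K i (m + 1 + k) j)! : ℕ) : ℚ) =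
      (m + 1 + k)! * (∏ j, (K j)! : ℕ) / ((m + 1) * m !) := by
    have h := prod_factorial_update_mul_factorial K i (K i + k)
    rw [hm, factorial_succ] at h
    rw [eq_div_iff (by positivity)]
    exact_mod_cast h
  rw [if_neg hi, hm, Nat.add_sub_cancel, hprod, add_right_comm m 1 k, cast_choose_add_succ]
  push_cast
  field_simp

/-- For natural numbers `k`, `k₀`, and `k₁,…,kₙ` (given by `K : Fin n → ℕ`),
with `N = (k+1) + k₀ + k₁ + ⋯ + kₙ`, the multinomial identity
`N!/(k₀!⋯kₙ!(k+1)!) = C(k₀+k+1, k₀)·(N−1)!/((k₀+k)!·k₁!⋯kₙ!)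
  + Σᵢ C(kᵢ+k, kᵢ−1)·(N−1)!/(k₀!⋯(kᵢ+k)!⋯kₙ!)`
holds in `ℚ`, where the `i`-th summand is taken to be `0` when `kᵢ = 0`. -/
theorem multinomial_recursion_identity (n k k₀ : ℕ) (K : Fin n → ℕ)
    (N : ℕ) (hN : N = (k + 1) + k₀ + ∑ i, K i) :
    (N ! : ℚ) / ((k₀ ! * ∏ i, (K i)!) * (k + 1)!) =
      (Nat.choose (k₀ + k + 1) k₀ : ℚ) * (N - 1)! / ((k₀ + k)! * ∏ i, (K i)!)
      + ∑ i, (if K i = 0 then 0 else (Nat.choose (K i + k) (K i - 1) : ℚ)) *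
          (N - 1)! / (k₀ ! * ∏ j, (Function.update K i (K i + k) j)!) := by
  have hNcast : (N : ℚ) = k₀ + k + 1 + ∑ i, (K i : ℚ) := by rw [hN]; push_cast; ring
  rw [cast_choose_add_succ_mul_div,
    sum_congr rfl fun i _ => ite_choose_mul_div_prod_update K i k k₀ _, ← sum_mul, ← add_mul,
    ← Nat.mul_factorial_pred (by omega : N ≠ 0)]
  push_cast
  rw [hNcast]
  ring
end

section
/- Fix an integer g ≥ 2 and a rational number B. Suppose that for each n ≥ 1 we are given a symmetric function F_n : ℕ^n → ℚ such that F_1(2g−2) = B, and such that for every n ≥ 0, every k ≥ 1, and all natural numbers k_0, k_1, …, k_n with (k+1) + k_0 + k_1 + ⋯ + k_n = 2g + (n+2) − 3, one has F_{n+2}(k+1, k_0, k_1, …, k_n) = C(k_0+k+1, k_0)·F_{n+1}(k_0+k, k_1, …, k_n) + Σ_{i=1}^{n} C(k_i+k, k_i−1)·F_{n+1}(k_0, …, k_i+k, …, k_n), where the i-th summand is taken to be 0 when k_i = 0. Then for every n ≥ 1 and all natural numbers k_1, …, k_n with k_1 + ⋯ + k_n = 2g + n − 3, one has F_n(k_1,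 …, k_n) = ((2g+n−3)!/(k_1!⋯k_n!))·B. -/
/-!
Since `g ≥ 2`, a tuple of `n ≥ 2` entries summing to `2g + n - 3 > n` has an entry `≥ 2`;
by symmetry it can be moved to the front, and the recursion then expresses `F_n` through
`F_{n-1}` at tuples of the right total. Hence two symmetric solutions agreeing at `n = 1`
agree everywhere. The multinomial coefficients `B · (k₁ + ⋯ + kₙ)! / (k₁! ⋯ kₙ!)` form such a
solution: with `s = k + 1 + k₀ + ∑ Kᵢ`, the terms on the right of the recursion are `k₀ + k + 1`
and `Kᵢ` times `(s - 1)! / ((k + 1)! k₀! ∏ Kᵢ!)`, and these weights add up to `s`.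
-/

open Finset Nat

@[to_additive]
theorem Finset.prod_update_mul_apply {ι M : Type*} [Fintype ι] [DecidableEq ι] [CommMonoid M]
    (f : ι → M) (i : ι) (b : M) :
    (∏ x, Function.update f i b x) * f i = b * ∏ x, f x := by
  rw [prod_update_of_mem (mem_univ i), sdiff_singleton_eq_erase, mul_assoc,
    prod_erase_mul _ _ (mem_univ i)]

theorem Fintype.exists_two_le_of_card_lt_sum {ι : Type*} [Fintype ι] (K : ι → ℕ)
    (h : Fintype.card ι < ∑ i, K i) : ∃ j, 2 ≤ K j := by
  by_contra! hK
  have : ∑ i, K i ≤ ∑ _i : ι, 1 := sum_le_sum fun i _ => Nat.le_of_lt_succ (hK i)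
  simp only [sum_const, Finset.card_univ, smul_eq_mul, mul_one] at this
  omega

theorem Fin.exists_perm_comp_eq_cons_cons {α : Type*} {p : ℕ} (K : Fin (p + 2) → α)
    (j : Fin (p + 2)) : ∃ (σ : Equiv.Perm (Fin (p + 2))) (a : α) (K' : Fin p → α),
      K ∘ σ = Fin.cons (K j) (Fin.cons a K') := by
  refine ⟨Equiv.swap 0 j, K (Equiv.swap 0 j 1), Fin.tail (Fin.tail (K ∘ Equiv.swap 0 j)), ?_⟩
  ext i
  refine Fin.cases ?_ (Fin.cases ?_ fun i => ?_) i <;> simp [Fin.tail]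

namespace Nat

theorem multinomial_comp_perm {n : ℕ} (K : Fin n → ℕ) (σ : Equiv.Perm (Fin n)) :
    multinomial univ (K ∘ σ) = multinomial univ K := by
  simp only [multinomial, Function.comp_apply, Equiv.sum_comp σ K,
    Equiv.prod_comp σ fun i => (K i)!]

theorem multinomial_fin_one (a : ℕ) : multinomial univ (fun _ : Fin 1 => a) = 1 := by
  simp [multinomial, Nat.div_self (factorial_pos a)]

theorem cast_multinomial_univ {n : ℕ} (K : Fin n → ℕ) :
    (multinomial univ K : ℚ) = (∑ i, K i)! / ∏ i, ((K i)! : ℚ) := by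
  rw [eq_div_iff (prod_ne_zero_iff.2 fun i _ => by positivity), mul_comm]
  exact_mod_cast multinomial_spec univ K

variable {n : ℕ} (K : Fin n → ℕ) (a k : ℕ)

theorem choose_mul_cast_multinomial_cons :
    (choose (a + k + 1) a : ℚ) * multinomial univ (Fin.cons (a + k) K : Fin (n + 1) → ℕ) =
      (a + k + 1 : ℕ) * ((a + k + ∑ i, K i)! / ((k + 1)! * a ! * ∏ i, ((K i)! : ℚ))) := by
  simp only [cast_multinomial_univ, Fin.sum_cons, Fin.prod_univ_succ, Fin.cons_zero,
    Fin.cons_succ]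
  rw [cast_choose ℚ (by omega), show a + k + 1 - a = k + 1 by omega, factorial_succ (a + k)]
  have hP : ∏ i, ((K i)! : ℚ) ≠ 0 := prod_ne_zero_iff.2 fun i _ => by positivity
  field_simp
  push_cast
  ring

theorem choose_mul_cast_multinomial_cons_update (i : Fin n) (hi : K i ≠ 0) :
    (choose (K i + k) (K i - 1) : ℚ) *
        multinomial univ (Fin.cons a (Function.update K i (K i + k)) : Fin (n + 1) → ℕ) =
      (K i : ℕ) * ((a + k + ∑ i, K i)! / ((k + 1)! * a ! * ∏ i, ((K i)! : ℚ))) := by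
  obtain ⟨m, hm⟩ : ∃ m, K i = m + 1 := exists_eq_succ_of_ne_zero hi
  have hsum := sum_update_add_apply K i (K i + k)
  have hprod : (∏ x, ((Function.update K i (K i + k) x)! : ℚ)) * (K i)! =
      (K i + k)! * ∏ x, ((K x)! : ℚ) := by
    convert prod_update_mul_apply (fun x => ((K x)! : ℚ)) i ((K i + k)! : ℚ) using 3 with x
    exact Function.apply_update (fun _ b => (b ! : ℚ)) K i (K i + k) x
  simp only [cast_multinomial_univ, Fin.sum_cons, Fin.prod_univ_succ, Fin.cons_zero,
    Fin.cons_succ]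
  rw [cast_choose ℚ (by omega), show K i + k - (K i - 1) = k + 1 by omega,
    show a + ∑ x, Function.update K i (K i + k) x = a + k + ∑ i, K i by omega]
  have hP' : ∏ x, ((Function.update K i (K i + k) x)! : ℚ) ≠ 0 :=
    prod_ne_zero_iff.2 fun x _ => by positivity
  have hP : ∏ x, ((K x)! : ℚ) ≠ 0 := prod_ne_zero_iff.2 fun x _ => by positivity
  generalize ∏ x, ((Function.update K i (K i + k) x)! : ℚ) = P' at hprod hP' ⊢
  rw [hm, factorial_succ] at hprod
  rw [hm, add_tsub_cancel_right]
  field_simp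
  push_cast at hprod ⊢
  linear_combination -hprod

theorem cast_multinomial_cons_cons :
    (multinomial univ (Fin.cons (k + 1) (Fin.cons a K) : Fin (n + 2) → ℕ) : ℚ) =
      (k + 1 + a + ∑ i, K i : ℕ) *
        ((a + k + ∑ i, K i)! / ((k + 1)! * a ! * ∏ i, ((K i)! : ℚ))) := by
  simp only [cast_multinomial_univ, Fin.sum_cons, Fin.prod_univ_succ, Fin.cons_zero,
    Fin.cons_succ]
  rw [show k + 1 + (a + ∑ i, K i) = (a + k + ∑ i, K i) + 1 by omega, factorial_succ]
  push_cast
  ring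

theorem cast_multinomial_virasoro_recursion :
    (multinomial univ (Fin.cons (k + 1) (Fin.cons a K) : Fin (n + 2) → ℕ) : ℚ) =
      (choose (a + k + 1) a : ℚ) * multinomial univ (Fin.cons (a + k) K : Fin (n + 1) → ℕ)
        + ∑ i, (if K i = 0 then 0 else (choose (K i + k) (K i - 1) : ℚ)) *
            multinomial univ
              (Fin.cons a (Function.update K i (K i + k)) : Fin (n + 1) → ℕ) := by
  have hterm : ∀ i, (if K i = 0 then 0 else (choose (K i + k) (K i - 1) : ℚ)) *
      multinomial univ (Fin.cons a (Function.update K i (K i + k)) : Fin (n + 1) → ℕ) =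
        (K i : ℕ) * ((a + k + ∑ i, K i)! / ((k + 1)! * a ! * ∏ i, ((K i)! : ℚ))) := by
    intro i
    by_cases hi : K i = 0
    · simp [hi]
    · rw [if_neg hi, choose_mul_cast_multinomial_cons_update K a k i hi]
  rw [sum_congr rfl fun i _ => hterm i, ← sum_mul, choose_mul_cast_multinomial_cons,
    cast_multinomial_cons_cons]
  push_cast
  ring

end Nat

def IsSymmetricFamily (F : (n : ℕ) → (Fin n → ℕ) → ℚ) : Prop :=
  ∀ (n : ℕ) (σ : Equiv.Perm (Fin n)) (v : Fin n → ℕ), F n (v ∘ σ) = F n v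

def SatisfiesVirasoroRecursion (g : ℕ) (F : (n : ℕ) → (Fin n → ℕ) → ℚ) : Prop :=
  ∀ (n k k₀ : ℕ) (K : Fin n → ℕ), 1 ≤ k →
    (k + 1) + k₀ + ∑ i, K i = 2 * g + (n + 2) - 3 →
    F (n + 2) (Fin.cons (k + 1) (Fin.cons k₀ K)) =
      (Nat.choose (k₀ + k + 1) k₀ : ℚ) * F (n + 1) (Fin.cons (k₀ + k) K)
      + ∑ i, (if K i = 0 then 0 else (Nat.choose (K i + k) (K i - 1) : ℚ)) *
          F (n + 1) (Fin.cons k₀ (Function.update K i (K i + k)))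

theorem isSymmetricFamily_multinomial (B : ℚ) :
    IsSymmetricFamily fun _ K => (multinomial univ K : ℚ) * B := fun _ σ K => by
  dsimp only
  rw [multinomial_comp_perm]

theorem satisfiesVirasoroRecursion_multinomial (g : ℕ) (B : ℚ) :
    SatisfiesVirasoroRecursion g fun _ K => (multinomial univ K : ℚ) * B :=
  fun _ k k₀ K _ _ => by
    simp only [cast_multinomial_virasoro_recursion K k₀ k, add_mul, sum_mul, mul_assoc]

section Uniqueness

variable {g : ℕ} {F G : (n : ℕ) → (Fin n → ℕ) → ℚ}

theorem SatisfiesVirasoroRecursion.eq_cons_cons_of_eq (hF : SatisfiesVirasoroRecursion g F)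
    (hG : SatisfiesVirasoroRecursion g G) {p k k₀ : ℕ} {K : Fin p → ℕ}
    (ih : ∀ K : Fin (p + 1) → ℕ, ∑ i, K i = 2 * g + (p + 1) - 3 →
      F (p + 1) K = G (p + 1) K)
    (hk : 1 ≤ k) (hsum : (k + 1) + k₀ + ∑ i, K i = 2 * g + (p + 2) - 3) :
    F (p + 2) (Fin.cons (k + 1) (Fin.cons k₀ K)) =
      G (p + 2) (Fin.cons (k + 1) (Fin.cons k₀ K)) := by
  rw [hF p k k₀ K hk hsum, hG p k k₀ K hk hsum, ih _ (by rw [Fin.sum_cons]; omega)]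
  congr 1
  refine sum_congr rfl fun i _ => ?_
  have hupdate := sum_update_add_apply K i (K i + k)
  rw [ih _ (by rw [Fin.sum_cons]; omega)]

theorem eq_of_satisfiesVirasoroRecursion (hg : 2 ≤ g) (hFs : IsSymmetricFamily F)
    (hGs : IsSymmetricFamily G) (hF : SatisfiesVirasoroRecursion g F)
    (hG : SatisfiesVirasoroRecursion g G)
    (hbase : F 1 (fun _ => 2 * g - 2) = G 1 (fun _ => 2 * g - 2)) :
    ∀ (n : ℕ) (K : Fin n → ℕ), 1 ≤ n → ∑ i, K i = 2 * g + n - 3 → F n K = G n K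
  | 0, _, hn, _ => absurd hn (by omega)
  | 1, K, _, hK => by
    rw [Fin.sum_univ_one] at hK
    rwa [show K = fun _ => 2 * g - 2 from funext fun i => by rw [Fin.fin_one_eq_zero i]; omega]
  | p + 2, K, _, hK => by
    obtain ⟨j, hj⟩ := Fintype.exists_two_le_of_card_lt_sum K (by rw [Fintype.card_fin]; omega)
    obtain ⟨σ, k₀, K', hσ⟩ := Fin.exists_perm_comp_eq_cons_cons K j
    have hsum : ∑ i, (K ∘ σ) i = ∑ i, K i := Equiv.sum_comp σ K
    rw [hσ, Fin.sum_cons, Fin.sum_cons] at hsum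
    rw [← hFs _ σ, ← hGs _ σ, hσ, show K j = (K j - 1) + 1 by omega]
    exact hF.eq_cons_cons_of_eq hG
      (fun K hK => eq_of_satisfiesVirasoroRecursion hg hFs hGs hF hG hbase (p + 1) K (by omega) hK)
      (by omega) (by omega)

end Uniqueness

/-- Fix an integer `g ≥ 2` and `B : ℚ`. Given symmetric functions
`F n : (Fin n → ℕ) → ℚ` with `F 1 (2g−2) = B` satisfying the degree-0 Virasoro
recursion, the unique solution is
`F n (k₁,…,kₙ) = ((2g+n−3)!/(k₁!⋯kₙ!))·B` whenever `k₁ + ⋯ + kₙ = 2g + n − 3`. -/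
theorem virasoro_recursion_lambda_g_unique_solution
    (g : ℕ) (hg : 2 ≤ g) (B : ℚ)
    (F : (n : ℕ) → (Fin n → ℕ) → ℚ)
    (hsymm : ∀ (n : ℕ) (σ : Equiv.Perm (Fin n)) (v : Fin n → ℕ),
      F n (v ∘ σ) = F n v)
    (hbase : F 1 (fun _ => 2 * g - 2) = B)
    (hrec : ∀ (n k k₀ : ℕ) (K : Fin n → ℕ), 1 ≤ k →
      (k + 1) + k₀ + ∑ i, K i = 2 * g + (n + 2) - 3 →
      F (n + 2) (Fin.cons (k + 1) (Fin.cons k₀ K)) =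
        (Nat.choose (k₀ + k + 1) k₀ : ℚ) * F (n + 1) (Fin.cons (k₀ + k) K)
        + ∑ i, (if K i = 0 then 0 else (Nat.choose (K i + k) (K i - 1) : ℚ)) *
            F (n + 1) (Fin.cons k₀ (Function.update K i (K i + k)))) :
    ∀ (n : ℕ) (K : Fin n → ℕ), 1 ≤ n → ∑ i, K i = 2 * g + n - 3 →
      F n K = ((2 * g + n - 3)! : ℚ) / (∏ i, (K i)!) * B := by
  intro n K hn hK
  have hbase' : F 1 (fun _ => 2 * g - 2) =
      (multinomial univ (fun _ : Fin 1 => 2 * g - 2) : ℚ) * B := by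
    rw [hbase, multinomial_fin_one, cast_one, one_mul]
  rw [eq_of_satisfiesVirasoroRecursion hg hsymm (isSymmetricFamily_multinomial B) hrec
    (satisfiesVirasoroRecursion_multinomial g B) hbase' n K hn hK, cast_multinomial_univ, hK,
    cast_prod]
end

section
/- Fix an integer g ≥ 2 and a rational number B. Suppose that for each n ≥ 1 we are given a symmetric function F_n defined on n-tuples of positive integers with values in ℚ such that F_1(g−1) = B, and such that for every n ≥ 0, every k ≥ 0, and all positive integers k_0, k_1, …, k_n with (k+1) + k_0 + k_1 + ⋯ + k_n = g + n, one has F_{n+2}(k+1, k_0, k_1, …, k_n) = ((2k+2k_0+1)!!/((2k+1)!!·(2k_0−1)!!))·F_{n+1}(k_0+k, k_1, …, k_n) + Σ_{i=1}^{n} ((2k+2k_i−1)!!/((2k+1)!!·(2k_i−3)!!))·F_{n+1}(k_0, …, k_i+k, …, k_n). Then for every n ≥ 1 and all positive integers k_1, …, k_n with k_1 + ⋯ + k_n = g − 2 + n, one has F_n(k_1, …, k_n) = ((2g+n−3)!·(2g−1)!!/((2g−1)!·(2k_1−1)!!⋯(2k_n−1)!!))·B. -/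
open Finset Nat

/-- The odd double factorial: `oddDoubleFactorial m = (2m−1)!! = ∏_{j=1}^{m} (2j−1)`,
so in particular `oddDoubleFactorial 0 = (−1)!! = 1`. -/
def oddDoubleFactorial (m : ℕ) : ℕ := ∏ j ∈ Finset.range m, (2 * j + 1)

lemma odf_pos (m : ℕ) : 0 < oddDoubleFactorial m :=
  Finset.prod_pos fun _ _ => by omega

lemma odf_succ (m : ℕ) : oddDoubleFactorial (m + 1) = oddDoubleFactorial m * (2 * m + 1) :=
  Finset.prod_range_succ _ _

lemma odf_cast_ne (m : ℕ) : (oddDoubleFactorial m : ℚ) ≠ 0 :=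
  Nat.cast_ne_zero.2 (odf_pos m).ne'

lemma fact_cast_ne (m : ℕ) : ((m ! : ℕ) : ℚ) ≠ 0 :=
  Nat.cast_ne_zero.2 (Nat.factorial_ne_zero m)

lemma prod_update_odf {m : ℕ} (T : Fin m → ℕ) (i : Fin m) (b : ℕ) :
    (oddDoubleFactorial (T i) : ℚ) * ∏ j, (oddDoubleFactorial (Function.update T i b j) : ℚ)
      = (oddDoubleFactorial b : ℚ) * ∏ j, (oddDoubleFactorial (T j) : ℚ) := by
  have h : (fun j => (oddDoubleFactorial (Function.update T i b j) : ℚ))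
      = Function.update (fun j => (oddDoubleFactorial (T j) : ℚ)) i (oddDoubleFactorial b : ℚ) := by
    funext j
    rcases eq_or_ne j i with rfl | hji
    · simp
    · simp [Function.update_of_ne hji]
  rw [h, Finset.prod_update_of_mem (Finset.mem_univ i),
    ← Finset.mul_prod_erase Finset.univ _ (Finset.mem_univ i),
    Finset.sdiff_singleton_eq_erase]
  ring

lemma sum_update_nat {m : ℕ} (T : Fin m → ℕ) (i : Fin m) (b : ℕ) :
    T i + ∑ j, Function.update T i b j = b + ∑ j, T j := by
  rw [Finset.sum_update_of_mem (Finset.mem_univ i),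
    ← Finset.add_sum_erase Finset.univ _ (Finset.mem_univ i),
    Finset.sdiff_singleton_eq_erase]
  ring

/-- Fix an integer `g ≥ 2` and `B : ℚ`. Given symmetric functions
`F n` on `n`-tuples of positive integers with `F 1 (g−1) = B` satisfying the
degree-0 Virasoro recursion for `⟨τ_{k₁}⋯τ_{kₙ} | λ_g λ_{g−1}⟩_g` (with
double-factorial coefficients), the unique solution is
`F n (k₁,…,kₙ) = ((2g+n−3)!·(2g−1)!!/((2g−1)!·(2k₁−1)!!⋯(2kₙ−1)!!))·B`
whenever `k₁ + ⋯ + kₙ = g − 2 + n`. -/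
theorem virasoro_recursion_lambda_g_lambda_gsub1_unique_solution
    (g : ℕ) (hg : 2 ≤ g) (B : ℚ)
    (F : (n : ℕ) → (Fin n → ℕ) → ℚ)
    (hsymm : ∀ (n : ℕ) (σ : Equiv.Perm (Fin n)) (v : Fin n → ℕ),
      F n (v ∘ σ) = F n v)
    (hbase : F 1 (fun _ => g - 1) = B)
    (hrec : ∀ (n k k₀ : ℕ) (K : Fin n → ℕ), 0 < k₀ → (∀ i, 0 < K i) →
      (k + 1) + k₀ + ∑ i, K i = g + n →
      F (n + 2) (Fin.cons (k + 1) (Fin.cons k₀ K)) =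
        ((oddDoubleFactorial (k + k₀ + 1) : ℚ) /
            (oddDoubleFactorial (k + 1) * oddDoubleFactorial k₀)) *
          F (n + 1) (Fin.cons (k₀ + k) K)
        + ∑ i, ((oddDoubleFactorial (k + K i) : ℚ) /
              (oddDoubleFactorial (k + 1) * oddDoubleFactorial (K i - 1))) *
            F (n + 1) (Fin.cons k₀ (Function.update K i (K i + k)))) :
    ∀ (n : ℕ) (K : Fin n → ℕ), 1 ≤ n → (∀ i, 0 < K i) →
      ∑ i, K i = g - 2 + n →
      F n K = (((2 * g + n - 3)! : ℚ) * oddDoubleFactorial g) /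
          (((2 * g - 1)! : ℚ) * ∏ i, (oddDoubleFactorial (K i) : ℚ)) * B := by
  obtain ⟨a, rfl⟩ : ∃ a, g = a + 2 := ⟨g - 2, by omega⟩
  intro n K hn hKpos hs
  obtain ⟨m, rfl⟩ : ∃ m, n = m + 1 := ⟨n - 1, by omega⟩
  clear hn hg hsymm
  induction m with
  | zero =>
    have hsum1 : K 0 = a + 1 := by
      simp at hs
      omega
    have hK0 : K = fun _ => (a + 2) - 1 := by
      funext i
      refine Fin.cases ?_ (fun j => j.elim0) i
      show K 0 = a + 2 - 1
      omega
    rw [hK0, hbase, Fin.prod_univ_one]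
    have e1 : 2 * (a + 2) + (0 + 1) - 3 = 2 * a + 2 := by omega
    have e2 : 2 * (a + 2) - 1 = 2 * a + 2 + 1 := by omega
    have e3 : (a + 2) - 1 = a + 1 := by omega
    rw [e1, e2, e3]
    have hfac : ((2 * a + 2 + 1)! : ℚ) = (2 * (a : ℚ) + 3) * ((2 * a + 2)! : ℚ) := by
      rw [Nat.factorial_succ]; push_cast; ring
    rw [hfac]
    have hodf : (oddDoubleFactorial (a + 2) : ℚ)
        = (2 * (a : ℚ) + 3) * oddDoubleFactorial (a + 1) := by
      rw [show a + 2 = a + 1 + 1 from rfl, odf_succ]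
      push_cast; ring
    rw [hodf]
    have h1 : ((2 * a + 2)! : ℚ) ≠ 0 := fact_cast_ne _
    have h2 : (oddDoubleFactorial (a + 1) : ℚ) ≠ 0 := odf_cast_ne _
    have h3 : (2 * (a : ℚ) + 3) ≠ 0 := by positivity
    field_simp
  | succ m ih =>
    obtain ⟨k, hk⟩ : ∃ k, K 0 = k + 1 := ⟨K 0 - 1, by have := hKpos 0; omega⟩
    obtain ⟨k0, hk0⟩ : ∃ k0, K 1 = k0 := ⟨_, rfl⟩
    obtain ⟨T, hT⟩ : ∃ T : Fin m → ℕ, T = fun i => K i.succ.succ := ⟨_, rfl⟩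
    have hk0pos : 0 < k0 := hk0 ▸ hKpos 1
    have hTpos : ∀ i, 0 < T i := by
      intro i; rw [hT]; exact hKpos _
    have hKeq : K = Fin.cons (k + 1) (Fin.cons k0 T) := by
      funext i
      refine Fin.cases ?_ (fun j => ?_) i
      · simpa using hk
      · refine Fin.cases ?_ (fun jj => ?_) j
        · simpa [Fin.succ_zero_eq_one] using hk0
        · simp [Fin.cons_succ, hT]
    rw [hKeq] at hs ⊢
    simp only [Fin.sum_cons] at hs
    have hsum2 : (k + 1) + k0 + ∑ i, T i = (a + 2) + m := by omega
    rw [hrec m k k0 T hk0pos hTpos hsum2]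
    -- apply the induction hypothesis to all terms on the RHS
    have h0 : F (m + 1) (Fin.cons (k0 + k) T)
        = (((2 * (a + 2) + (m + 1) - 3)! : ℚ) * oddDoubleFactorial (a + 2)) /
            (((2 * (a + 2) - 1)! : ℚ) *
              ∏ i, (oddDoubleFactorial ((Fin.cons (k0 + k) T : Fin (m + 1) → ℕ) i) : ℚ)) * B := by
      apply ih
      · intro i
        refine Fin.cases ?_ (fun j => ?_) i
        · simp only [Fin.cons_zero]; omega
        · simp only [Fin.cons_succ]; exact hTpos j
      · rw [Fin.sum_cons]; omega
    have hi : ∀ i : Fin m, F (m + 1) (Fin.cons k0 (Function.update T i (T i + k)))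
        = (((2 * (a + 2) + (m + 1) - 3)! : ℚ) * oddDoubleFactorial (a + 2)) /
            (((2 * (a + 2) - 1)! : ℚ) *
              ∏ j, (oddDoubleFactorial
                ((Fin.cons k0 (Function.update T i (T i + k)) : Fin (m + 1) → ℕ) j) : ℚ)) * B := by
      intro i
      apply ih
      · intro j
        refine Fin.cases ?_ (fun jj => ?_) j
        · simpa using hk0pos
        · simp only [Fin.cons_succ]
          rcases eq_or_ne jj i with rfl | hji
          · rw [Function.update_self]; have := hTpos jj; omega
          · rw [Function.update_of_ne hji]; exact hTpos jj
      · rw [Fin.sum_cons]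
        have := sum_update_nat T i (T i + k)
        omega
    rw [h0]
    simp only [hi]
    simp only [Fin.prod_univ_succ, Fin.cons_zero, Fin.cons_succ]
    have e1 : 2 * (a + 2) + (m + 1 + 1) - 3 = 2 * a + m + 2 + 1 := by omega
    have e2 : 2 * (a + 2) + (m + 1) - 3 = 2 * a + m + 2 := by omega
    have e3 : 2 * (a + 2) - 1 = 2 * a + 3 := by omega
    rw [e1, e2, e3]
    have hfacm : ((2 * a + m + 2 + 1)! : ℚ)
        = (2 * (a : ℚ) + m + 3) * ((2 * a + m + 2)! : ℚ) := by
      rw [Nat.factorial_succ]; push_cast; ring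
    rw [hfacm]
    -- now a pure arithmetic identity in ℚ
    set P : ℚ := ∏ i, (oddDoubleFactorial (T i) : ℚ) with hPdef
    have hPne : P ≠ 0 := Finset.prod_ne_zero_iff.2 fun i _ => odf_cast_ne _
    have hNne : ((2 * a + m + 2)! : ℚ) ≠ 0 := fact_cast_ne _
    have hDne : ((2 * a + 3)! : ℚ) ≠ 0 := fact_cast_ne _
    have hgne : (oddDoubleFactorial (a + 2) : ℚ) ≠ 0 := odf_cast_ne _
    have hk1ne : (oddDoubleFactorial (k + 1) : ℚ) ≠ 0 := odf_cast_ne _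
    have hk0ne : (oddDoubleFactorial k0 : ℚ) ≠ 0 := odf_cast_ne _
    set E : ℚ := (((2 * a + m + 2)! : ℚ) * oddDoubleFactorial (a + 2)) /
        (((2 * a + 3)! : ℚ) *
          ((oddDoubleFactorial (k + 1) : ℚ) * ((oddDoubleFactorial k0 : ℚ) * P))) * B
      with hEdef
    have hscast : ((k : ℚ) + 1) + k0 + ((∑ i, T i : ℕ) : ℚ) = (a : ℚ) + 2 + m := by
      exact_mod_cast hsum2
    trans ((2 * (k : ℚ) + 2 * k0 + 1) * E + (2 * ((∑ i, T i : ℕ) : ℚ) - m) * E)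
    · congr 1
      · -- the k₀ term
        have hodf1 : (oddDoubleFactorial (k + k0 + 1) : ℚ)
            = (oddDoubleFactorial (k + k0) : ℚ) * (2 * (k : ℚ) + 2 * k0 + 1) := by
          rw [odf_succ]; push_cast; ring
        rw [show k0 + k = k + k0 from Nat.add_comm _ _, hodf1, hEdef]
        have hkk0ne : (oddDoubleFactorial (k + k0) : ℚ) ≠ 0 := odf_cast_ne _
        field_simp
      · -- the sum
        have hsq : ∑ i : Fin m, (2 * (T i : ℚ) - 1) = 2 * ((∑ i, T i : ℕ) : ℚ) - m := by
          rw [Finset.sum_sub_distrib, ← Finset.mul_sum]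
          push_cast
          simp
        rw [← hsq, Finset.sum_mul]
        refine Finset.sum_congr rfl fun i _ => ?_
        have hq : (oddDoubleFactorial (T i) : ℚ) *
            ∏ j, (oddDoubleFactorial (Function.update T i (T i + k) j) : ℚ)
              = (oddDoubleFactorial (T i + k) : ℚ) * P := prod_update_odf T i (T i + k)
        have hTi1 : (1 : ℚ) ≤ (T i : ℚ) := by exact_mod_cast hTpos i
        have hd : (oddDoubleFactorial (T i) : ℚ)
            = (oddDoubleFactorial (T i - 1) : ℚ) * (2 * (T i : ℚ) - 1) := by
          obtain ⟨t, ht⟩ : ∃ t, T i = t + 1 := ⟨T i - 1, by have := hTpos i; omega⟩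
          rw [ht, odf_succ]
          simp only [Nat.add_sub_cancel]
          push_cast
          ring
        have hQ : ∏ j, (oddDoubleFactorial (Function.update T i (T i + k) j) : ℚ)
            = (oddDoubleFactorial (T i + k) : ℚ) * P / (oddDoubleFactorial (T i) : ℚ) := by
          rw [eq_div_iff (odf_cast_ne _)]
          linarith [hq]
        rw [show k + T i = T i + k from Nat.add_comm _ _, hQ, hd, hEdef]
        have ht1ne : (oddDoubleFactorial (T i - 1) : ℚ) ≠ 0 := odf_cast_ne _
        have h2t : (2 * (T i : ℚ) - 1) ≠ 0 := by intro h; linarith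
        have htkne : (oddDoubleFactorial (T i + k) : ℚ) ≠ 0 := odf_cast_ne _
        field_simp
    · have hco : (2 * (k : ℚ) + 2 * k0 + 1) + (2 * ((∑ i, T i : ℕ) : ℚ) - m)
          = ((2 * a + m + 2 + 1 : ℕ) : ℚ) := by
        push_cast at hscast ⊢
        linarith [hscast]
      rw [← add_mul, hco, hEdef]
      push_cast
      ring
end
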